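/- arXiv:2402.11044 — 4 statements merged into one kernel-verified Lean document; each statement's English description precedes it below -/
import Mathlib

section
/- Let k ≥ 3. In any decomposition of the complete graph K_{2k} into k+1 star-forests, no star-forest of the decomposition consists of a single star with at least one edge; that is, every star-forest in the decomposition that contains an edge has at least two connected components containing an edge. -/
/-- A star-forest: there is a set `C` of centers such that every edge has exactly one
endpoint in `C`, and every vertex outside `C` is incident to at most one edge.
Equivalently, every connected component of `G` is a star. -/
def IsStarForest {V : Type*} (G : SimpleGraph V) : Prop :=
  ∃ C : Set V, (∀ ⦃u v : V⦄, G.Adj u v → (u ∈ C ↔ v ∉ C)) ∧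
    ∀ v ∉ C, ∀ u w : V, G.Adj v u → G.Adj v w → u = w

/-- A decomposition of the complete graph on `V`: every edge (pair of distinct vertices)
lies in exactly one of the subgraphs `F i`. -/
def IsDecompositionOfComplete {V : Type*} {m : ℕ} (F : Fin m → SimpleGraph V) : Prop :=
  ∀ u v : V, u ≠ v → ∃! i : Fin m, (F i).Adj u v

/-!
If `F i` were a single star with center `a`, the other `k` forests would cover the complete graph
on the `n = 2k - 1` vertices other than `a`. For `k` star forests with center sets `C_j` covering
`K_n`, every edge has a non-center endpoint in a forest containing it, and a non-center lies on at
most one edge of each forest, so `n(n-1)/2 ≤ nk - Σ_j |C_j|`. On the other hand every vertex is a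
center somewhere (a vertex that never is one has degree at most `k < n - 1`), and by pigeonhole two
vertices `u, w` are centers of a common forest; the forest containing `uw` is another one, and one
of `u, w` is a center there too, so `Σ_j |C_j| ≥ n + 1`. For `n = 2k - 1` these bounds clash.
-/

open Finset SimpleGraph Fintype

variable {V W ι : Type*}

structure IsStarCenterSet (G : SimpleGraph V) (C : Set V) : Prop where
  mem_iff_notMem : ∀ ⦃u v : V⦄, G.Adj u v → (u ∈ C ↔ v ∉ C)
  eq_of_adj_of_notMem : ∀ v ∉ C, ∀ u w : V, G.Adj v u → G.Adj v w → u = w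

theorem isStarForest_iff_exists_isStarCenterSet {G : SimpleGraph V} :
    IsStarForest G ↔ ∃ C, IsStarCenterSet G C :=
  ⟨fun ⟨C, h₁, h₂⟩ => ⟨C, h₁, h₂⟩, fun ⟨C, h⟩ => ⟨C, h.1, h.2⟩⟩

namespace IsStarCenterSet

variable {G : SimpleGraph V} {C : Set V}

theorem comap (hC : IsStarCenterSet G C) {f : W → V} (hf : Function.Injective f) :
    IsStarCenterSet (G.comap f) (f ⁻¹' C) :=
  ⟨fun _ _ h => hC.mem_iff_notMem h,
    fun _ hv _ _ hu hw => hf (hC.eq_of_adj_of_notMem _ hv _ _ hu hw)⟩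

theorem incidenceSet_subsingleton (hC : IsStarCenterSet G C) {v : V} (hv : v ∉ C) :
    (G.incidenceSet v).Subsingleton := by
  rintro e ⟨he, hve⟩ e' ⟨he', hve'⟩
  obtain ⟨u, rfl⟩ := Sym2.mem_iff_exists.mp hve
  obtain ⟨u', rfl⟩ := Sym2.mem_iff_exists.mp hve'
  rw [hC.eq_of_adj_of_notMem v hv u u' he he']

theorem eq_or_adj_of_reachable (hC : IsStarCenterSet G C) {c u : V} (hc : c ∈ C)
    (h : G.Reachable c u) : u = c ∨ G.Adj c u := by
  rw [reachable_iff_reflTransGen] at h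
  induction h with
  | refl => exact .inl rfl
  | tail _ hvw ih =>
    rcases ih with rfl | hcv
    · exact .inr hvw
    · exact .inl (hC.eq_of_adj_of_notMem _ ((hC.mem_iff_notMem hcv).mp hc) _ _ hcv.symm hvw).symm

end IsStarCenterSet

theorem IsStarForest.comap {G : SimpleGraph V} (hG : IsStarForest G) {f : W → V}
    (hf : Function.Injective f) : IsStarForest (G.comap f) :=
  have ⟨_, hC⟩ := isStarForest_iff_exists_isStarCenterSet.mp hG
  isStarForest_iff_exists_isStarCenterSet.mpr ⟨_, hC.comap hf⟩

theorem IsStarForest.exists_forall_adj_eq_or_eq {G : SimpleGraph V} (hG : IsStarForest G)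
    (hconn : ∀ a b a' b', G.Adj a b → G.Adj a' b' → G.Reachable a a') {a b : V}
    (hab : G.Adj a b) : ∃ c, ∀ u v, G.Adj u v → u = c ∨ v = c := by
  obtain ⟨C, hC⟩ := isStarForest_iff_exists_isStarCenterSet.mp hG
  obtain ⟨c, d, hcd, hc⟩ : ∃ c d, G.Adj c d ∧ c ∈ C := by
    by_cases ha : a ∈ C
    · exact ⟨a, b, hab, ha⟩
    · exact ⟨b, a, hab.symm, not_not.mp ((hC.mem_iff_notMem hab).not.mp ha)⟩
  refine ⟨c, fun u v huv => ?_⟩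
  rcases hC.eq_or_adj_of_reachable hc (hconn c d u v hcd huv) with rfl | hcu
  · exact .inl rfl
  rcases hC.eq_or_adj_of_reachable hc (hconn c d v u hcd huv.symm) with rfl | hcv
  · exact .inr rfl
  exact absurd ((hC.mem_iff_notMem huv).mpr ((hC.mem_iff_notMem hcv).mp hc))
    ((hC.mem_iff_notMem hcu).mp hc)

section Cover

variable [Fintype V] [Fintype ι] {G : ι → SimpleGraph V} {C : ι → Set V}

theorem exists_mem_starCenters_of_top_le_iSup (hC : ∀ j, IsStarCenterSet (G j) (C j))
    (hcover : ⊤ ≤ ⨆ j, G j) (hcard : card ι + 2 ≤ card V) (v : V) : ∃ j, v ∈ C j := by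
  classical
  by_contra! hv
  choose f hf using fun w : {w // w ≠ v} => iSup_adj.mp (hcover w.2.symm)
  have hinj : Function.Injective f := fun w w' h =>
    Subtype.ext ((hC _).eq_of_adj_of_notMem v (hv _) _ _ (hf w) (h ▸ hf w'))
  have hdeg := card_le_of_injective f hinj
  simp only [card_subtype_compl, card_unique] at hdeg
  omega

open Classical in
theorem choose_two_add_card_starCenters_le (hC : ∀ j, IsStarCenterSet (G j) (C j))
    (hcover : ⊤ ≤ ⨆ j, G j) :
    (card V).choose 2 + #{p : V × ι | p.1 ∈ C p.2} ≤ card V * card ι := by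
  have hedges : (card V).choose 2 ≤ #{p : V × ι | p.1 ∉ C p.2} := by
    rw [← card_edgeFinset_top_eq_card_choose_two]
    refine card_le_card_of_forall_subsingleton (fun e p => e ∈ (G p.2).incidenceSet p.1)
      (fun e he => ?_) (fun p hp => ?_)
    · induction e using Sym2.ind with
      | _ u w =>
      obtain ⟨j, hj⟩ := iSup_adj.mp (hcover (mem_edgeFinset.mp he))
      by_cases hu : u ∈ C j
      · exact ⟨(w, j), by simp [(hC j).mem_iff_notMem hj |>.mp hu], hj, Sym2.mem_mk_right _ _⟩
      · exact ⟨(u, j), by simp [hu], hj, Sym2.mem_mk_left _ _⟩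
    · exact ((hC p.2).incidenceSet_subsingleton (mem_filter.mp hp).2).anti fun e he => he.2
  have hsplit := card_filter_add_card_filter_not (s := univ) fun p : V × ι => p.1 ∈ C p.2
  rw [card_univ, card_prod] at hsplit
  omega

open Classical in
theorem card_lt_card_starCenters (hC : ∀ j, IsStarCenterSet (G j) (C j))
    (hcover : ⊤ ≤ ⨆ j, G j) (hcard : card ι + 2 ≤ card V) :
    card V < #{p : V × ι | p.1 ∈ C p.2} := by
  choose c hc using exists_mem_starCenters_of_top_le_iSup hC hcover hcard
  obtain ⟨u, w, huw, hcuw⟩ := exists_ne_map_eq_of_card_lt c (by omega)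
  obtain ⟨j, hj⟩ := iSup_adj.mp (hcover huw)
  have hju : j ≠ c u := fun h =>
    ((hC j).mem_iff_notMem hj).mp (h ▸ hc u) (h ▸ hcuw ▸ hc w)
  obtain ⟨x, hxj, hcx⟩ : ∃ x, x ∈ C j ∧ c x = c u := by
    by_cases hu : u ∈ C j
    · exact ⟨u, hu, rfl⟩
    · exact ⟨w, not_not.mp (((hC j).mem_iff_notMem hj).not.mp hu), hcuw.symm⟩
  let s := univ.image fun v => (v, c v)
  have hxs : (x, j) ∉ s := by
    simp only [s, mem_image, mem_univ, true_and, Prod.ext_iff, not_exists, not_and]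
    rintro _ rfl rfl
    exact hju hcx
  calc card V = #s := (card_image_of_injective _ fun _ _ h => congrArg Prod.fst h).symm
    _ < #(insert (x, j) s) := card_lt_card (ssubset_insert hxs)
    _ ≤ #{p : V × ι | p.1 ∈ C p.2} := card_le_card fun p hp => by
      rcases mem_insert.mp hp with rfl | hp
      · simpa using hxj
      · obtain ⟨v, -, rfl⟩ := mem_image.mp hp
        simpa using hc v

theorem add_one_lt_two_mul_card_of_top_le_iSup (hG : ∀ j, IsStarForest (G j))
    (hcover : ⊤ ≤ ⨆ j, G j) (hcard : card ι + 2 ≤ card V) : card V + 1 < 2 * card ι := by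
  classical
  choose C hC using fun j => isStarForest_iff_exists_isStarCenterSet.mp (hG j)
  have hsum := choose_two_add_card_starCenters_le hC hcover
  have hcenters := card_lt_card_starCenters hC hcover hcard
  have hchoose : 2 * (card V).choose 2 + card V = card V * card V := by
    rw [Nat.choose_two_right, Nat.mul_div_cancel' (Nat.even_mul_pred_self _).two_dvd]
    cases card V <;> simp [Nat.mul_succ]
  nlinarith

end Cover

/-- In any decomposition of `K_{2k}` (`k ≥ 3`) into `k + 1` star-forests, every
star-forest of the decomposition containing an edge has at least two connected components
containing an edge. -/
theorem no_single_star (k : ℕ) (hk : 3 ≤ k)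
    (F : Fin (k + 1) → SimpleGraph (Fin (2 * k)))
    (hdec : IsDecompositionOfComplete F) (hsf : ∀ i, IsStarForest (F i)) :
    ∀ i : Fin (k + 1), (∃ a b : Fin (2 * k), (F i).Adj a b) →
      ∃ a b a' b' : Fin (2 * k), (F i).Adj a b ∧ (F i).Adj a' b' ∧
        ¬ (F i).Reachable a a' := by
  rintro i ⟨a₀, b₀, hab₀⟩
  by_contra! hconn
  obtain ⟨a, ha⟩ := (hsf i).exists_forall_adj_eq_or_eq hconn hab₀
  let G (j : {j // j ≠ i}) : SimpleGraph {v // v ≠ a} := (F j).comap Subtype.val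
  have hcover : ⊤ ≤ ⨆ j, G j := fun u v huv => by
    obtain ⟨j, hj, -⟩ := hdec u v (Subtype.val_injective.ne huv)
    have hji : j ≠ i := by
      rintro rfl
      rcases ha u v hj with h | h
      exacts [u.2 h, v.2 h]
    exact iSup_adj.mpr ⟨⟨j, hji⟩, hj⟩
  have hV : card {v // v ≠ a} = 2 * k - 1 := by simp
  have hι : card {j // j ≠ i} = k := by simp
  have hbound := add_one_lt_two_mul_card_of_top_le_iSup
    (fun j : {j // j ≠ i} => (hsf j).comap Subtype.val_injective) hcover (by omega)
  omega
end

section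
/- Let k ≥ 3. In any decomposition of the complete graph K_{2k} into k+1 star-forests, at least one star-forest of the decomposition has exactly two connected components containing an edge. -/
/-!
Assume no star-forest has exactly two nontrivial components and fix centers for each of them.
In forest `i` let `c i` be the number of centers of positive degree, which is the number of
nontrivial components, and `z i` the number of isolated vertices. Every edge has exactly one
endpoint that is not a center, and non-centers have degree at most one, so
`c i + z i + #edges i = 2k`; summing over the forests, `∑ (c i + z i) = 3k`.

The degrees of a vertex in the `k + 1` forests add up to `2k - 1`, so the vertex has degree at
least two in two forests, or degree at least `k - 1` in some forest. A forest with two vertices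
of degree at least `k - 1` has exactly two nontrivial components, so there are at most `k + 1`
vertices of the second kind, and counting vertices of degree at least two gives
`∑ c i ≥ 3k - 1`, hence `∑ z i ≤ 1`. A forest with at most one nontrivial component has a
vertex of degree at least `2k - 2`, which is then isolated in `k - 1 ≥ 2` other forests; so
every `c i ≥ 3` and `∑ c i ≥ 3k + 3`, a contradiction.
-/

open Finset

namespace SimpleGraph

variable {V : Type*}

structure IsStarCenters (G : SimpleGraph V) (C : Finset V) : Prop where
  mem_iff_notMem ⦃u v : V⦄ : G.Adj u v → (u ∈ C ↔ v ∉ C)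
  eq_of_adj_of_notMem ⦃v : V⦄ : v ∉ C → ∀ ⦃u w : V⦄, G.Adj v u → G.Adj v w → u = w

namespace IsStarCenters

variable {G : SimpleGraph V} {C : Finset V} {c v : V} (hC : G.IsStarCenters C)
include hC

lemma eq_or_adj_of_reachable (hc : c ∈ C) (h : G.Reachable c v) : v = c ∨ G.Adj c v := by
  obtain ⟨p⟩ := h
  suffices ∀ {u} (q : G.Walk u v), (u = c ∨ G.Adj c u) → v = c ∨ G.Adj c v from
    this p (.inl rfl)
  clear p
  intro u p
  induction p with
  | nil => exact id
  | @cons u w _ huw _ ih =>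
    rintro (rfl | hcu)
    · exact ih (.inr huw)
    · exact ih (.inl (hC.eq_of_adj_of_notMem ((hC.mem_iff_notMem hcu).1 hc) huw hcu.symm))

lemma eq_of_reachable (hc : c ∈ C) (hv : v ∈ C) (h : G.Reachable c v) : v = c :=
  (hC.eq_or_adj_of_reachable hc h).resolve_right fun hcv => (hC.mem_iff_notMem hcv).1 hc hv

end IsStarCenters

variable [Fintype V]

lemma _root_.IsStarForest.exists_isStarCenters {G : SimpleGraph V}
    (h : IsStarForest G) : ∃ C : Finset V, G.IsStarCenters C := by
  classical
  obtain ⟨C, hadj, hleaf⟩ := h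
  exact ⟨C.toFinset, fun u v huv => by simpa using hadj huv,
    fun v hv => hleaf v (by simpa using hv)⟩

variable (G : SimpleGraph V) [DecidableRel G.Adj]

def activeCenters (C : Finset V) : Finset V := {v ∈ C | 0 < G.degree v}

def isolatedVertices : Finset V := {v | G.degree v = 0}

variable {G} {C : Finset V} {v : V}

namespace IsStarCenters

variable (hC : G.IsStarCenters C)
include hC

lemma ncard_nontrivial_components :
    {K : G.ConnectedComponent | ∃ a b, G.Adj a b ∧ G.connectedComponentMk a = K}.ncard =
      #(G.activeCenters C) := by
  have himage : {K : G.ConnectedComponent | ∃ a b, G.Adj a b ∧ G.connectedComponentMk a = K} =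
      G.connectedComponentMk '' ↑(G.activeCenters C) := by
    ext K
    simp only [activeCenters, coe_filter, degree_pos_iff_exists_adj, Set.mem_ofPred_eq,
      Set.mem_image]
    constructor
    · rintro ⟨a, b, hab, rfl⟩
      by_cases ha : a ∈ C
      · exact ⟨a, ⟨ha, b, hab⟩, rfl⟩
      · exact ⟨b, ⟨by_contra fun hb => ha ((hC.mem_iff_notMem hab).2 hb), a, hab.symm⟩,
          ConnectedComponent.sound hab.symm.reachable⟩
    · rintro ⟨a, ⟨-, b, hab⟩, rfl⟩
      exact ⟨a, b, hab, rfl⟩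
  rw [himage, Set.InjOn.ncard_image, Set.ncard_coe_finset]
  intro a ha b hb hab
  exact hC.eq_of_reachable (mem_filter.1 hb).1 (mem_filter.1 ha).1
    (ConnectedComponent.exact hab.symm)

lemma degree_le_one (hv : v ∉ C) : G.degree v ≤ 1 := by
  rw [← card_neighborFinset_eq_degree, card_le_one]
  intro u hu w hw
  exact hC.eq_of_adj_of_notMem hv ((mem_neighborFinset ..).1 hu) ((mem_neighborFinset ..).1 hw)

lemma mem_activeCenters_of_two_le_degree (hv : 2 ≤ G.degree v) : v ∈ G.activeCenters C := by
  refine mem_filter.2 ⟨by_contra fun hvC => ?_, by omega⟩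
  have := hC.degree_le_one hvC
  omega

variable [DecidableEq V]

omit [DecidableRel G.Adj] in
lemma isBipartiteWith : G.IsBipartiteWith C ↑Cᶜ where
  disjoint := by simp [Set.disjoint_left]
  mem_of_adj u v huv := by
    by_cases hu : u ∈ C
    · exact .inl ⟨hu, by simpa using (hC.mem_iff_notMem huv).1 hu⟩
    · exact .inr ⟨by simpa using hu, by_contra fun hv => hu ((hC.mem_iff_notMem huv).2 hv)⟩

lemma card_leaves : #{v ∈ Cᶜ | 0 < G.degree v} = #G.edgeFinset := by
  rw [← isBipartiteWith_sum_degrees_eq_card_edges' hC.isBipartiteWith, card_filter]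
  refine sum_congr rfl fun v hv => ?_
  have := hC.degree_le_one (mem_compl.1 hv)
  split_ifs <;> omega

lemma sum_degree_activeCenters : ∑ v ∈ G.activeCenters C, G.degree v = #G.edgeFinset := by
  rw [← isBipartiteWith_sum_degrees_eq_card_edges hC.isBipartiteWith, activeCenters,
    sum_filter_of_ne]
  intro v _ hv
  exact Nat.pos_of_ne_zero hv

lemma card_activeCenters_add_card_isolatedVertices :
    #(G.activeCenters C) + #G.isolatedVertices + #G.edgeFinset = Fintype.card V := by
  have hactive : #(G.activeCenters C) + #{v ∈ Cᶜ | 0 < G.degree v} = #{v | 0 < G.degree v} := by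
    rw [activeCenters, ← card_union_of_disjoint (disjoint_filter_filter disjoint_compl_right)]
    congr 1
    ext v
    by_cases v ∈ C <;> simp [*]
  rw [← hC.card_leaves, isolatedVertices, add_right_comm, hactive]
  simpa only [not_lt, nonpos_iff_eq_zero, card_univ] using
    card_filter_add_card_filter_not (s := univ) (0 < G.degree ·)

lemma card_activeCenters_add_sum_degree_sub_one :
    #(G.activeCenters C) + ∑ v ∈ G.activeCenters C, (G.degree v - 1) = #G.edgeFinset := by
  rw [← hC.sum_degree_activeCenters, card_eq_sum_ones, ← sum_add_distrib]
  refine sum_congr rfl fun v hv => ?_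
  have := (mem_filter.1 hv).2
  omega

lemma pair_subset_activeCenters {u w : V} (hu : 2 ≤ G.degree u) (hw : 2 ≤ G.degree w) :
    {u, w} ⊆ G.activeCenters C :=
  insert_subset (hC.mem_activeCenters_of_two_le_degree hu)
    (singleton_subset_iff.2 (hC.mem_activeCenters_of_two_le_degree hw))

lemma degree_add_degree_add_two_mul_card_activeCenters_le {u w : V} (huw : u ≠ w)
    (hu : 2 ≤ G.degree u) (hw : 2 ≤ G.degree w) :
    G.degree u + G.degree w + 2 * #(G.activeCenters C) ≤ Fintype.card V + 2 := by
  have hsum := sum_le_sum_of_subset (f := (G.degree · - 1)) (hC.pair_subset_activeCenters hu hw)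
  rw [sum_pair huw] at hsum
  have := hC.card_activeCenters_add_sum_degree_sub_one
  have := hC.card_activeCenters_add_card_isolatedVertices
  omega

lemma card_le_one_of_le_degree {k : ℕ} (hk : 3 ≤ k) (hV : Fintype.card V = 2 * k)
    (h2 : #(G.activeCenters C) ≠ 2) : #{v | k - 1 ≤ G.degree v} ≤ 1 := by
  refine card_le_one.2 fun u hu w hw => by_contra fun huw => ?_
  simp only [mem_filter, mem_univ, true_and] at hu hw
  have hu2 : 2 ≤ G.degree u := by omega
  have hw2 : 2 ≤ G.degree w := by omega
  have hle := hC.degree_add_degree_add_two_mul_card_activeCenters_le huw hu2 hw2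
  have h2le := card_le_card (hC.pair_subset_activeCenters hu2 hw2)
  rw [card_pair huw] at h2le
  omega

lemma exists_card_edgeFinset_le_degree [Nonempty V] (h : #(G.activeCenters C) ≤ 1) :
    ∃ y, #G.edgeFinset ≤ G.degree y := by
  obtain ⟨y, hy⟩ := card_le_one_iff_subset_singleton.1 h
  refine ⟨y, ?_⟩
  rw [← hC.sum_degree_activeCenters]
  exact (sum_le_sum_of_subset hy).trans_eq (sum_singleton _ _)

end IsStarCenters

end SimpleGraph

open SimpleGraph

lemma Finset.sum_le_apply_add_card_sub_one {ι : Type*} [Fintype ι] [DecidableEq ι]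
    (d : ι → ℕ) (i : ι) (h : ∀ j ≠ i, d j ≤ 1) : ∑ j, d j ≤ d i + (Fintype.card ι - 1) := by
  rw [← add_sum_erase _ _ (mem_univ i)]
  gcongr
  exact (sum_le_card_nsmul _ _ 1 fun j hj => h j (ne_of_mem_erase hj)).trans_eq (by simp)

section Decomposition

variable {V : Type*} [Fintype V] [DecidableEq V] {m : ℕ} {F : Fin m → SimpleGraph V}
  [∀ i, DecidableRel (F i).Adj]

lemma IsDecompositionOfComplete.sum_degree (hdec : IsDecompositionOfComplete F) (v : V) :
    ∑ i, (F i).degree v = Fintype.card V - 1 := by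
  have hdisj : Set.PairwiseDisjoint ↑(univ : Finset (Fin m)) (F · |>.neighborFinset v) := by
    intro i _ j _ hij
    refine disjoint_left.2 fun u hi hj => hij ?_
    rw [mem_neighborFinset] at hi hj
    exact (hdec v u hi.ne).unique hi hj
  have hunion : univ.biUnion (fun i => (F i).neighborFinset v) = univ.erase v := by
    ext u
    simp only [mem_biUnion, mem_univ, true_and, mem_neighborFinset, mem_erase, and_true]
    exact ⟨fun ⟨i, hi⟩ => hi.ne', fun hu => (hdec v u (Ne.symm hu)).exists⟩
  simp_rw [← card_neighborFinset_eq_degree]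
  rw [← card_biUnion hdisj, hunion, card_erase_of_mem (mem_univ v), card_univ]

lemma IsDecompositionOfComplete.two_mul_sum_card_edgeFinset (hdec : IsDecompositionOfComplete F) :
    2 * ∑ i, #(F i).edgeFinset = Fintype.card V * (Fintype.card V - 1) := by
  simp_rw [mul_sum, ← sum_degrees_eq_twice_card_edges]
  rw [sum_comm]
  simp [hdec.sum_degree]

lemma IsDecompositionOfComplete.add_degree_le_card_degree_eq_zero_add
    (hdec : IsDecompositionOfComplete F) (i : Fin m) (v : V) :
    m + (F i).degree v ≤ #{l | (F l).degree v = 0} + Fintype.card V := by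
  have hrest := sum_le_sum fun l (_ : l ∈ univ.erase i) =>
    show 1 ≤ (if (F l).degree v = 0 then 1 else 0) + (F l).degree v by split_ifs <;> omega
  rw [sum_add_distrib] at hrest
  have hisolated := add_sum_erase univ (fun l => if (F l).degree v = 0 then 1 else 0) (mem_univ i)
  have hdegree := add_sum_erase univ (fun l => (F l).degree v) (mem_univ i)
  have := hdec.sum_degree v
  have := Fintype.card_pos_iff.2 ⟨v⟩
  simp only [sum_const, card_erase_of_mem (mem_univ i), card_univ, Fintype.card_fin,
    smul_eq_mul, mul_one] at hrest
  rw [card_filter]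
  split_ifs at hisolated <;> omega

end Decomposition

lemma card_degree_eq_zero_le_sum_card_isolatedVertices {V ι : Type*} [Fintype V] [Fintype ι]
    (F : ι → SimpleGraph V) [∀ i, DecidableRel (F i).Adj] (v : V) :
    #{l | (F l).degree v = 0} ≤ ∑ l, #(F l).isolatedVertices := by
  rw [card_eq_sum_ones, sum_filter]
  refine sum_le_sum fun l _ => ?_
  split_ifs with h
  · exact card_pos.2 ⟨v, by simp [isolatedVertices, h]⟩
  · exact Nat.zero_le _

section StarForestDecomposition

variable {k : ℕ} {F : Fin (k + 1) → SimpleGraph (Fin (2 * k))} [∀ i, DecidableRel (F i).Adj]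
  {C : Fin (k + 1) → Finset (Fin (2 * k))}

lemma sum_card_activeCenters_add_card_isolatedVertices (hdec : IsDecompositionOfComplete F)
    (hC : ∀ i, (F i).IsStarCenters (C i)) :
    ∑ i, (#((F i).activeCenters (C i)) + #(F i).isolatedVertices) = 3 * k := by
  have hvertices : ∑ i, (#((F i).activeCenters (C i)) + #(F i).isolatedVertices) +
      ∑ i, #(F i).edgeFinset = (k + 1) * (2 * k) := by
    simp [← sum_add_distrib, (hC _).card_activeCenters_add_card_isolatedVertices]
  have hedges := hdec.two_mul_sum_card_edgeFinset
  rw [Fintype.card_fin] at hedges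
  rcases k with _ | k
  · omega
  · rw [show 2 * (k + 1) - 1 = 2 * k + 1 by omega] at hedges
    nlinarith

lemma exists_le_degree_or_two_le_card (hk : 3 ≤ k) (hdec : IsDecompositionOfComplete F)
    (v : Fin (2 * k)) :
    (∃ i, k - 1 ≤ (F i).degree v) ∨ 2 ≤ #{i | 2 ≤ (F i).degree v} := by
  obtain ⟨i, -, hi⟩ := exists_max_image univ (fun i => (F i).degree v) univ_nonempty
  by_cases hsmall : ∀ j ≠ i, (F j).degree v ≤ 1
  · have := sum_le_apply_add_card_sub_one (fun j => (F j).degree v) i hsmall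
    rw [hdec.sum_degree, Fintype.card_fin, Fintype.card_fin] at this
    exact .inl ⟨i, by omega⟩
  · push Not at hsmall
    obtain ⟨j, hji, hj⟩ := hsmall
    refine .inr ((card_pair hji.symm).symm.trans_le (card_le_card ?_))
    simp only [insert_subset_iff, singleton_subset_iff, mem_filter, mem_univ, true_and]
    exact ⟨hj.trans_le (hi j (mem_univ j)), hj⟩

lemma three_mul_sub_one_le_sum_card_activeCenters (hk : 3 ≤ k)
    (hdec : IsDecompositionOfComplete F) (hC : ∀ i, (F i).IsStarCenters (C i))
    (h2 : ∀ i, #((F i).activeCenters (C i)) ≠ 2) :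
    3 * k - 1 ≤ ∑ i, #((F i).activeCenters (C i)) := by
  set B := univ.biUnion fun i => ({v | k - 1 ≤ (F i).degree v} : Finset (Fin (2 * k)))
  have hB : #B ≤ k + 1 := card_biUnion_le.trans <| (sum_le_card_nsmul _ _ 1 fun i _ =>
    (hC i).card_le_one_of_le_degree hk (Fintype.card_fin _) (h2 i)).trans_eq (by simp)
  have hvertex : ∀ v, 2 ≤ #{i | 2 ≤ (F i).degree v} + if v ∈ B then 1 else 0 := by
    intro v
    rcases exists_le_degree_or_two_le_card hk hdec v with ⟨i, hi⟩ | h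
    · have hvB : v ∈ B := mem_biUnion.2 ⟨i, mem_univ i, by simpa using hi⟩
      have : 0 < #{i | 2 ≤ (F i).degree v} :=
        card_pos.2 ⟨i, mem_filter.2 ⟨mem_univ i, by omega⟩⟩
      simp only [hvB, if_true]
      omega
    · omega
  have hcount : ∑ v, #{i | 2 ≤ (F i).degree v} ≤ ∑ i, #((F i).activeCenters (C i)) := by
    simp_rw [card_filter]
    rw [sum_comm]
    refine sum_le_sum fun i _ => ?_
    rw [← card_filter]
    exact card_le_card fun v hv => (hC i).mem_activeCenters_of_two_le_degree (by simpa using hv)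
  have hsum := sum_le_sum fun v (_ : v ∈ univ) => hvertex v
  simp only [sum_add_distrib, sum_boole, sum_const, card_univ, Fintype.card_fin, smul_eq_mul,
    filter_mem_eq_inter, univ_inter, Nat.cast_id] at hsum
  omega

lemma two_le_card_activeCenters (hk : 3 ≤ k) (hdec : IsDecompositionOfComplete F)
    (hC : ∀ i, (F i).IsStarCenters (C i)) (hiso : ∑ i, #(F i).isolatedVertices ≤ 1)
    (i : Fin (k + 1)) : 2 ≤ #((F i).activeCenters (C i)) := by
  by_contra! hsmall
  have : Nonempty (Fin (2 * k)) := ⟨⟨0, by omega⟩⟩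
  obtain ⟨y, hy⟩ := (hC i).exists_card_edgeFinset_le_degree (by omega)
  have hisoi : #(F i).isolatedVertices ≤ 1 :=
    (single_le_sum (fun l _ => Nat.zero_le _) (mem_univ i)).trans hiso
  have hvertices := (hC i).card_activeCenters_add_card_isolatedVertices
  have hzero := hdec.add_degree_le_card_degree_eq_zero_add i y
  have := card_degree_eq_zero_le_sum_card_isolatedVertices F y
  rw [Fintype.card_fin] at hvertices hzero
  omega

end StarForestDecomposition

/-- In any decomposition of `K_{2k}` (`k ≥ 3`) into `k + 1` star-forests, some star-forest
of the decomposition has exactly two connected components containing an edge. -/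
theorem exists_two_component_star_forest (k : ℕ) (hk : 3 ≤ k)
    (F : Fin (k + 1) → SimpleGraph (Fin (2 * k)))
    (hdec : IsDecompositionOfComplete F) (hsf : ∀ i, IsStarForest (F i)) :
    ∃ i : Fin (k + 1),
      {C : (F i).ConnectedComponent |
        ∃ a b : Fin (2 * k), (F i).Adj a b ∧ (F i).connectedComponentMk a = C}.ncard = 2 := by
  classical
  by_contra! hcon
  choose C hC using fun i => (hsf i).exists_isStarCenters
  have h2 : ∀ i, #((F i).activeCenters (C i)) ≠ 2 := fun i h =>
    hcon i ((hC i).ncard_nontrivial_components.trans h)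
  have hsum := sum_card_activeCenters_add_card_isolatedVertices hdec hC
  have hlow := three_mul_sub_one_le_sum_card_activeCenters hk hdec hC h2
  rw [sum_add_distrib] at hsum
  have h3 : ∀ i ∈ univ, 3 ≤ #((F i).activeCenters (C i)) := fun i _ =>
    (two_le_card_activeCenters hk hdec hC (by omega) i).lt_of_ne (h2 i).symm
  have := card_nsmul_le_sum univ _ 3 h3
  simp only [card_univ, Fintype.card_fin, smul_eq_mul] at this
  omega
end

section
/- There exists a set of 6 points in general position in ℝ² whose complete geometric graph admits a decomposition into 4 plane star-forests such that every one of the 6 points is the center of at least one star of the decomposition. -/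
/-- A family of points in the plane, indexed by `V`, is in general position if the points
are pairwise distinct and no three of them are collinear. -/
def GenPos {V : Type*} (pts : V → ℝ × ℝ) : Prop :=
  Function.Injective pts ∧
  ∀ i j l : V, i ≠ j → i ≠ l → j ≠ l →
    ¬ Collinear ℝ ({pts i, pts j, pts l} : Set (ℝ × ℝ))

/-- A geometric graph (graph `G` with vertices drawn at the points `pts` and edges drawn
as straight segments) is plane if any two distinct edges intersect at most in common
endpoints. -/
def IsPlaneGraph {V : Type*} (pts : V → ℝ × ℝ) (G : SimpleGraph V) : Prop :=
  ∀ a b c d : V, G.Adj a b → G.Adj c d → s(a, b) ≠ s(c, d) →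
    ∀ x : ℝ × ℝ, x ∈ segment ℝ (pts a) (pts b) → x ∈ segment ℝ (pts c) (pts d) →
      (x = pts a ∨ x = pts b) ∧ (x = pts c ∨ x = pts d)

/-- A decomposition of the complete geometric graph on the points `pts` into `m` plane
star-forests. -/
def IsPlaneStarForestDecomp {V : Type*} {m : ℕ} (pts : V → ℝ × ℝ)
    (F : Fin m → SimpleGraph V) : Prop :=
  (∀ u v : V, u ≠ v → ∃! i : Fin m, (F i).Adj u v) ∧
  (∀ i, IsStarForest (F i)) ∧ (∀ i, IsPlaneGraph pts (F i))

/-- `v` is the center of one of the stars (connected components) of the star-forest `G`: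
every edge of the component of `v` is incident to `v`. -/
def IsStarCenter {V : Type*} (G : SimpleGraph V) (v : V) : Prop :=
  ∀ a b : V, G.Adj a b → G.Reachable v a → a = v ∨ b = v

/-! The configuration is explicit, with integer coordinates. The first of the four star-forests
is a perfect matching, so every point is the center of a one-edge star there. Everything else is
a sign condition on integer orientation determinants: in general position two segments with a
common endpoint meet only there, and two segments without common endpoint are disjoint as soon
as the endpoints of one lie strictly on the same side of the line through the other. -/

section Orientation

variable {R : Type*} [CommRing R]

/-- Twice the signed area of the triangle `p q r`; positive iff `r` lies to the left of the
line from `p` to `q`. -/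
def orient (p q r : R × R) : R :=
  (q.1 - p.1) * (r.2 - p.2) - (q.2 - p.2) * (r.1 - p.1)

lemma map_orient {S : Type*} [CommRing S] (f : R →+* S) (p q r : R × R) :
    orient (Prod.map f f p) (Prod.map f f q) (Prod.map f f r) = f (orient p q r) := by
  simp [orient]

lemma orient_self_left (p q : R × R) : orient p q p = 0 := by
  unfold orient; ring

lemma orient_self_right (p q : R × R) : orient p q q = 0 := by
  unfold orient; ring

lemma orient_add_smul_sub (p q r s : R × R) (t : R) :
    orient p q (r + t • (s - r)) = orient p q r + t * (orient p q s - orient p q r) := by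
  simp only [orient, Prod.fst_add, Prod.snd_add, Prod.smul_fst, Prod.smul_snd, Prod.fst_sub,
    Prod.snd_sub, smul_eq_mul]
  ring

end Orientation

lemma orient_eq_zero_of_collinear {𝕜 : Type*} [Field 𝕜] {p q r : 𝕜 × 𝕜}
    (h : Collinear 𝕜 ({p, q, r} : Set (𝕜 × 𝕜))) : orient p q r = 0 := by
  rw [collinear_iff_of_mem (Set.mem_insert p _)] at h
  obtain ⟨v, hv⟩ := h
  obtain ⟨a, rfl⟩ := hv q (by simp)
  obtain ⟨b, rfl⟩ := hv r (by simp)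
  simp only [orient, vadd_eq_add, Prod.fst_add, Prod.snd_add, Prod.smul_fst, Prod.smul_snd,
    smul_eq_mul]
  ring

section Segments

variable {𝕜 : Type*} [Field 𝕜] [LinearOrder 𝕜] [IsStrictOrderedRing 𝕜]

lemma orient_eq_zero_of_mem_segment {p q x : 𝕜 × 𝕜} (hx : x ∈ segment 𝕜 p q) :
    orient p q x = 0 := by
  obtain ⟨t, -, rfl⟩ := (segment_eq_image' 𝕜 p q ▸ hx)
  simp [orient_add_smul_sub, orient_self_left, orient_self_right]

lemma eq_of_mem_segment_of_mem_segment {p q r x : 𝕜 × 𝕜} (h : orient p q r ≠ 0)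
    (hq : x ∈ segment 𝕜 p q) (hr : x ∈ segment 𝕜 p r) : x = p := by
  obtain ⟨t, -, rfl⟩ := (segment_eq_image' 𝕜 p r ▸ hr)
  have ht : t * orient p q r = 0 := by
    simpa [orient_add_smul_sub, orient_self_left]
      using orient_eq_zero_of_mem_segment hq
  simp [(mul_eq_zero.mp ht).resolve_right h]

lemma not_mem_segment_of_orient_mul_pos {p q r s x : 𝕜 × 𝕜}
    (h : 0 < orient p q r * orient p q s) (hpq : x ∈ segment 𝕜 p q) :
    x ∉ segment 𝕜 r s := by
  intro hrs
  obtain ⟨t, ⟨ht0, ht1⟩, rfl⟩ := (segment_eq_image' 𝕜 r s ▸ hrs)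
  have h0 := orient_eq_zero_of_mem_segment hpq
  rw [orient_add_smul_sub] at h0
  have hr : orient p q r ≠ 0 := left_ne_zero_of_mul h.ne'
  have hsum : (1 - t) * orient p q r ^ 2 + t * (orient p q r * orient p q s) = 0 := by
    linear_combination orient p q r * h0
  have ht : t = 0 := by
    nlinarith [mul_nonneg (sub_nonneg.mpr ht1) (sq_nonneg (orient p q r))]
  exact hr (by simpa [ht] using h0)

end Segments

section PlaneGraphs

variable {V : Type*}

lemma isPlaneGraph_of_separated {pts : V → ℝ × ℝ} {G : SimpleGraph V}
    (hgp : ∀ i j l, i ≠ j → i ≠ l → j ≠ l → orient (pts i) (pts j) (pts l) ≠ 0)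
    (hsep : ∀ a b c d, G.Adj a b → G.Adj c d → a ≠ c → a ≠ d → b ≠ c → b ≠ d →
      0 < orient (pts a) (pts b) (pts c) * orient (pts a) (pts b) (pts d) ∨
      0 < orient (pts c) (pts d) (pts a) * orient (pts c) (pts d) (pts b)) :
    IsPlaneGraph pts G := by
  intro a b c d hab hcd hne x hx₁ hx₂
  have hab' := G.ne_of_adj hab
  have hcd' := G.ne_of_adj hcd
  by_cases hac : a = c
  · subst hac
    have hbd : b ≠ d := by rintro rfl; exact hne rfl
    have hx := eq_of_mem_segment_of_mem_segment (hgp a b d hab' hcd' hbd) hx₁ hx₂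
    exact ⟨.inl hx, .inl hx⟩
  by_cases had : a = d
  · subst had
    have hbc : b ≠ c := by rintro rfl; exact hne Sym2.eq_swap
    have hx := eq_of_mem_segment_of_mem_segment (hgp a b c hab' hcd'.symm hbc) hx₁
      (by rwa [segment_symm] at hx₂)
    exact ⟨.inl hx, .inr hx⟩
  by_cases hbc : b = c
  · subst hbc
    have hx := eq_of_mem_segment_of_mem_segment (hgp b a d hab'.symm hcd' had)
      (by rwa [segment_symm] at hx₁) hx₂
    exact ⟨.inr hx, .inl hx⟩
  by_cases hbd : b = d
  · subst hbd
    have hx := eq_of_mem_segment_of_mem_segment (hgp b a c hab'.symm hcd'.symm hac)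
      (by rwa [segment_symm] at hx₁) (by rwa [segment_symm] at hx₂)
    exact ⟨.inr hx, .inr hx⟩
  rcases hsep a b c d hab hcd hac had hbc hbd with h | h
  · exact absurd hx₂ (not_mem_segment_of_orient_mul_pos h hx₁)
  · exact absurd hx₁ (not_mem_segment_of_orient_mul_pos h hx₂)

def intPoints (P : V → ℤ × ℤ) : V → ℝ × ℝ := fun v => Prod.map (↑) (↑) (P v)

lemma orient_intPoints (P : V → ℤ × ℤ) (i j l : V) :
    orient (intPoints P i) (intPoints P j) (intPoints P l) = orient (P i) (P j) (P l) :=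
  map_orient (Int.castRingHom ℝ) _ _ _

variable {P : V → ℤ × ℤ}

lemma genPos_intPoints (hinj : Function.Injective P)
    (hgp : ∀ i j l, i ≠ j → i ≠ l → j ≠ l → orient (P i) (P j) (P l) ≠ 0) :
    GenPos (intPoints P) := by
  refine ⟨fun i j h => hinj ?_, fun i j l hij hil hjl hcol => ?_⟩
  · simpa [intPoints, Prod.ext_iff] using h
  · have := orient_eq_zero_of_collinear hcol
    rw [orient_intPoints, Int.cast_eq_zero] at this
    exact hgp i j l hij hil hjl this

lemma isPlaneGraph_intPoints {G : SimpleGraph V}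
    (hgp : ∀ i j l, i ≠ j → i ≠ l → j ≠ l → orient (P i) (P j) (P l) ≠ 0)
    (hsep : ∀ a b c d, G.Adj a b → G.Adj c d → a ≠ c → a ≠ d → b ≠ c → b ≠ d →
      0 < orient (P a) (P b) (P c) * orient (P a) (P b) (P d) ∨
      0 < orient (P c) (P d) (P a) * orient (P c) (P d) (P b)) :
    IsPlaneGraph (intPoints P) G := by
  refine isPlaneGraph_of_separated (fun i j l hij hil hjl => ?_)
    (fun a b c d hab hcd hac had hbc hbd => ?_)
  · simpa [orient_intPoints] using hgp i j l hij hil hjl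
  · simpa only [orient_intPoints, ← Int.cast_mul, Int.cast_pos]
      using hsep a b c d hab hcd hac had hbc hbd

end PlaneGraphs

section Matchings

variable {V : Type*} {G : SimpleGraph V}

lemma isStarCenter_of_adj_unique (h : ∀ u x y, G.Adj u x → G.Adj u y → x = y) (v : V) :
    IsStarCenter G v := by
  let S : Set V := {x | x = v ∨ G.Adj v x}
  have hclosed : ∀ ⦃x y⦄, x ∈ S → G.Adj x y → y ∈ S := by
    rintro x y (rfl | hvx) hxy
    · exact .inr hxy
    · exact .inl (h x y v hxy hvx.symm)
  have hwalk : ∀ {x y} (p : G.Walk x y), x ∈ S → y ∈ S := by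
    intro x y p
    induction p with
    | nil => exact id
    | cons hxz _ ih => exact fun hx => ih (hclosed hx hxz)
  intro a b hab hva
  rcases hwalk hva.some (.inl rfl) with rfl | hva'
  · exact .inl rfl
  · exact .inr (h a b v hab hva'.symm)

end Matchings

def sixPoints : Fin 6 → ℤ × ℤ
  | 0 => (7, 2)
  | 1 => (9, 2)
  | 2 => (5, -1)
  | 3 => (8, -9)
  | 4 => (3, 7)
  | 5 => (-5, 7)

def starForestEdges : Fin 4 → List (Fin 6 × Fin 6)
  | 0 => [(0, 1), (2, 5), (3, 4)]
  | 1 => [(0, 2), (0, 3), (1, 4), (1, 5)]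
  | 2 => [(0, 4), (1, 3), (2, 4), (3, 5)]
  | 3 => [(0, 5), (1, 2), (2, 3), (4, 5)]

def starForestCenters : Fin 4 → Finset (Fin 6)
  | 0 => {0, 2, 3}
  | 1 => {0, 1}
  | 2 => {3, 4}
  | 3 => {2, 5}

def starForest (i : Fin 4) : SimpleGraph (Fin 6) :=
  SimpleGraph.fromRel fun u v => (u, v) ∈ starForestEdges i

instance (i : Fin 4) : DecidableRel (starForest i).Adj :=
  fun _ _ => inferInstanceAs (Decidable (_ ∧ (_ ∨ _)))

lemma sixPoints_injective : Function.Injective sixPoints := by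
  decide

lemma orient_sixPoints_ne_zero : ∀ i j l, i ≠ j → i ≠ l → j ≠ l →
    orient (sixPoints i) (sixPoints j) (sixPoints l) ≠ 0 := by
  decide

lemma starForest_separated (k : Fin 4) :
    ∀ a b c d, (starForest k).Adj a b → (starForest k).Adj c d →
      a ≠ c → a ≠ d → b ≠ c → b ≠ d →
      0 < orient (sixPoints a) (sixPoints b) (sixPoints c) *
        orient (sixPoints a) (sixPoints b) (sixPoints d) ∨
      0 < orient (sixPoints c) (sixPoints d) (sixPoints a) *
        orient (sixPoints c) (sixPoints d) (sixPoints b) := by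
  revert k; decide

lemma isStarForest_starForest (k : Fin 4) : IsStarForest (starForest k) := by
  refine ⟨starForestCenters k, ?_⟩
  simp only [Finset.mem_coe]
  revert k; decide

lemma starForest_existsUnique_adj :
    ∀ u v : Fin 6, u ≠ v → ∃! k, (starForest k).Adj u v := by
  simp only [ExistsUnique]; decide

lemma starForest_zero_adj_unique :
    ∀ u x y, (starForest 0).Adj u x → (starForest 0).Adj u y → x = y := by
  decide

/-- There exist `6` points in general position whose complete geometric graph decomposes
into `4` plane star-forests such that every point is the center of at least one star. -/
theorem six_points_four_star_forests :
    ∃ pts : Fin 6 → ℝ × ℝ, GenPos pts ∧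
      ∃ F : Fin 4 → SimpleGraph (Fin 6), IsPlaneStarForestDecomp pts F ∧
        ∀ v : Fin 6, ∃ i : Fin 4, IsStarCenter (F i) v :=
  ⟨intPoints sixPoints, genPos_intPoints sixPoints_injective orient_sixPoints_ne_zero,
    starForest,
    ⟨starForest_existsUnique_adj, isStarForest_starForest,
      fun k => isPlaneGraph_intPoints orient_sixPoints_ne_zero (starForest_separated k)⟩,
    fun v => ⟨0, isStarCenter_of_adj_unique starForest_zero_adj_unique v⟩⟩
end

section
/- For every integer k ≥ 1 there exists an SF-extendable arrangement of k pairwise disjoint line segments in the plane; that is, there exist 2k points in general position in ℝ² and a perfect matching of them by k pairwise disjoint segments such that the complete geometric graph on these 2k points admits a decomposition into k+1 plane star-forests, one of which is that perfect matching. -/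
/-- The `2 * k` endpoints of an arrangement of `k` segments, the `i`-th segment having
endpoints `A i` and `B i`. -/
def segPts {k : ℕ} (A B : Fin k → ℝ × ℝ) : Fin k × Bool → ℝ × ℝ :=
  fun p => if p.2 then B p.1 else A p.1

/-- The perfect matching formed by the `k` segments, pairing the two endpoints of each
segment. -/
def matchingGraph (k : ℕ) : SimpleGraph (Fin k × Bool) where
  Adj u v := u.1 = v.1 ∧ u.2 ≠ v.2
  symm := ⟨fun u v h => ⟨h.1.symm, h.2.symm⟩⟩
  loopless := ⟨fun u h => h.2 rfl⟩

/-- An arrangement of `k` segments (with endpoints `A i`, `B i`) is SF-extendable if the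
complete geometric graph on its `2 * k` endpoints admits a decomposition into `k + 1`
plane star-forests, one of which is the perfect matching formed by the `k` segments. -/
def SFExtendable {k : ℕ} (A B : Fin k → ℝ × ℝ) : Prop :=
  ∃ F : Fin (k + 1) → SimpleGraph (Fin k × Bool),
    IsPlaneStarForestDecomp (segPts A B) F ∧ ∃ i₀ : Fin (k + 1), F i₀ = matchingGraph k

/-!
Take `B j` on the unit circle at rational parameter `T j = 4 ^ (j + 1)`, and `A j` on a
concentric circle of tiny radius `d = 4 ^ -(k + 4)`, a quarter turn clockwise from `B j`.
Because the `T j` grow geometrically, no three endpoints are collinear, and of two segments the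
later one lies strictly on one side of the line through the earlier one, so they are disjoint.

Forest `i` consists of two stars centred at `A i` and `B i`. A line `ℓ i` crossing segment `i`
splits all other endpoints into two groups, and each group is joined to the centre on its own
side of `ℓ i`. The two stars are separated by `ℓ i`, and the edges of one star meet only at the
centre by general position, so forest `i` is plane. An edge `uv` between different segments
lies in forest `u.1` or in forest `v.1`, but not in both, and the matching takes the remaining
edges.
-/

open Set

noncomputable section

namespace StarForestArrangement

section Geometry

variable {a b c : ℝ} {p q r s x z : ℝ × ℝ}

def affineForm (a b c : ℝ) (x : ℝ × ℝ) : ℝ := a * x.1 + b * x.2 + c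

lemma affineForm_mem_segment (hx : x ∈ segment ℝ p q) :
    affineForm a b c x ∈ segment ℝ (affineForm a b c p) (affineForm a b c q) := by
  obtain ⟨t, u, ht, hu, htu, rfl⟩ := hx
  refine ⟨t, u, ht, hu, htu, ?_⟩
  simp only [affineForm, Prod.fst_add, Prod.snd_add, Prod.smul_fst, Prod.smul_snd, smul_eq_mul]
  linear_combination c * htu

lemma disjoint_segment_of_affineForm_neg_of_pos (hp : affineForm a b c p < 0)
    (hq : affineForm a b c q < 0) (hr : 0 < affineForm a b c r) (hs : 0 < affineForm a b c s) :
    Disjoint (segment ℝ p q) (segment ℝ r s) := by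
  refine Set.disjoint_left.2 fun x hpq hrs => ?_
  have hneg := (convex_Iio 0).segment_subset hp hq (affineForm_mem_segment hpq)
  have hpos := (convex_Ioi 0).segment_subset hr hs (affineForm_mem_segment hrs)
  exact lt_asymm (mem_Iio.1 hneg) (mem_Ioi.1 hpos)

/-- Twice the signed area of the triangle `p q r`, as an affine function of `r`. -/
def cross (p q : ℝ × ℝ) : ℝ × ℝ → ℝ :=
  affineForm (p.2 - q.2) (q.1 - p.1) (p.1 * q.2 - p.2 * q.1)

lemma cross_apply (p q r : ℝ × ℝ) :
    cross p q r = (q.1 - p.1) * (r.2 - p.2) - (q.2 - p.2) * (r.1 - p.1) := by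
  simp only [cross, affineForm]; ring

lemma cross_swap (p q r : ℝ × ℝ) : cross p r q = -cross p q r := by
  rw [cross_apply, cross_apply]; ring

lemma cross_self_left (p q : ℝ × ℝ) : cross p q p = 0 := by
  rw [cross_apply]; ring

lemma cross_self_right (p q : ℝ × ℝ) : cross p q q = 0 := by
  rw [cross_apply]; ring

lemma disjoint_segment_of_cross_pos (hr : 0 < cross p q r) (hs : 0 < cross p q s) :
    Disjoint (segment ℝ p q) (segment ℝ r s) := by
  refine Set.disjoint_left.2 fun x hpq hrs => ?_
  have hzero : cross p q x ∈ segment ℝ (cross p q p) (cross p q q) := affineForm_mem_segment hpq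
  rw [cross_self_left, cross_self_right, segment_same] at hzero
  have hpos := (convex_Ioi 0).segment_subset hr hs (affineForm_mem_segment hrs)
  exact (mem_Ioi.1 hpos).ne' hzero

lemma not_collinear_of_cross_ne_zero (h : cross p q r ≠ 0) :
    ¬ Collinear ℝ ({p, q, r} : Set (ℝ × ℝ)) := by
  intro hc
  obtain ⟨v, hv⟩ := (collinear_iff_of_mem (mem_insert p _)).1 hc
  obtain ⟨t, rfl⟩ := hv q (by simp)
  obtain ⟨u, rfl⟩ := hv r (by simp)
  apply h
  simp only [cross_apply, vadd_eq_add, Prod.fst_add, Prod.snd_add, Prod.smul_fst, Prod.smul_snd,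
    smul_eq_mul]
  ring

lemma eq_of_mem_segment_of_not_collinear (h : ¬ Collinear ℝ ({z, p, q} : Set (ℝ × ℝ)))
    (hp : x ∈ segment ℝ z p) (hq : x ∈ segment ℝ z q) : x = z := by
  by_contra hxz
  have hzxp := (mem_segment_iff_wbtw.1 hp).collinear
  have hzxq := (mem_segment_iff_wbtw.1 hq).collinear
  have hqzxp : Collinear ℝ (insert q {z, x, p}) := by
    rw [hzxp.collinear_insert_iff_of_ne (by simp) (by simp) (Ne.symm hxz)]
    rwa [insert_comm, pair_comm]
  exact h (hqzxp.subset (by intro y; simp; tauto))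

end Geometry

section Circles

variable {d S T U W : ℝ}

/-- Rational parametrisation of the unit circle; `innerPt d T` is `outerPt T` rotated by `-π/2`
and scaled by `d`. -/
def outerPt (T : ℝ) : ℝ × ℝ := ((1 - T ^ 2) / (1 + T ^ 2), 2 * T / (1 + T ^ 2))

def innerPt (d T : ℝ) : ℝ × ℝ := (d * (2 * T) / (1 + T ^ 2), d * (T ^ 2 - 1) / (1 + T ^ 2))

lemma outerPt_injective : Function.Injective outerPt := by
  have hrecover (T : ℝ) : (outerPt T).2 / (1 + (outerPt T).1) = T := by
    have : (0 : ℝ) < 1 + T ^ 2 := by positivity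
    simp only [outerPt]; field_simp; ring
  intro T U h
  rw [← hrecover T, ← hrecover U, h]

lemma innerPt_injective (hd : d ≠ 0) : Function.Injective (innerPt d) := by
  have hrecover (T : ℝ) : (innerPt d T).1 / (d - (innerPt d T).2) = T := by
    have : (0 : ℝ) < 1 + T ^ 2 := by positivity
    simp only [innerPt]; field_simp; ring
  intro T U h
  rw [← hrecover T, ← hrecover U, h]

lemma innerPt_fst_pos (hd : 0 < d) (hT : 0 < T) : 0 < (innerPt d T).1 := by
  simp only [innerPt]; positivity

lemma outerPt_fst_neg (hT : 1 < T) : (outerPt T).1 < 0 := by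
  simp only [outerPt]
  exact div_neg_of_neg_of_pos (by nlinarith) (by positivity)

def innerChordFactor (d T U W : ℝ) : ℝ :=
  (T + U) * (W ^ 2 - 1) - 2 * W * (T * U - 1) + d * (1 + W ^ 2) * (1 + T * U)

def outerChordFactor (d T U W : ℝ) : ℝ :=
  (1 + U * W) * (1 + T ^ 2) + d * ((U + W) * (1 - T ^ 2) + 2 * T * (U * W - 1))

lemma cross_innerPt_innerPt_innerPt (d T U W : ℝ) :
    cross (innerPt d T) (innerPt d U) (innerPt d W) =
      4 * d ^ 2 * (U - T) * (W - T) * (W - U) / ((1 + T ^ 2) * (1 + U ^ 2) * (1 + W ^ 2)) := by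
  have := (by positivity : (0 : ℝ) < 1 + T ^ 2)
  have := (by positivity : (0 : ℝ) < 1 + U ^ 2)
  have := (by positivity : (0 : ℝ) < 1 + W ^ 2)
  simp only [cross, affineForm, innerPt]; field_simp; ring

lemma cross_outerPt_outerPt_outerPt (T U W : ℝ) :
    cross (outerPt T) (outerPt U) (outerPt W) =
      4 * (U - T) * (W - T) * (W - U) / ((1 + T ^ 2) * (1 + U ^ 2) * (1 + W ^ 2)) := by
  have := (by positivity : (0 : ℝ) < 1 + T ^ 2)
  have := (by positivity : (0 : ℝ) < 1 + U ^ 2)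
  have := (by positivity : (0 : ℝ) < 1 + W ^ 2)
  simp only [cross, affineForm, outerPt]; field_simp; ring

lemma cross_innerPt_innerPt_outerPt (d T U W : ℝ) :
    cross (innerPt d T) (innerPt d U) (outerPt W) =
      2 * d * (U - T) * innerChordFactor d T U W / ((1 + T ^ 2) * (1 + U ^ 2) * (1 + W ^ 2)) := by
  have := (by positivity : (0 : ℝ) < 1 + T ^ 2)
  have := (by positivity : (0 : ℝ) < 1 + U ^ 2)
  have := (by positivity : (0 : ℝ) < 1 + W ^ 2)
  simp only [cross, affineForm, innerPt, outerPt, innerChordFactor]; field_simp; ring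

lemma cross_innerPt_outerPt_outerPt (d T U W : ℝ) :
    cross (innerPt d T) (outerPt U) (outerPt W) =
      2 * (W - U) * outerChordFactor d T U W / ((1 + T ^ 2) * (1 + U ^ 2) * (1 + W ^ 2)) := by
  have := (by positivity : (0 : ℝ) < 1 + T ^ 2)
  have := (by positivity : (0 : ℝ) < 1 + U ^ 2)
  have := (by positivity : (0 : ℝ) < 1 + W ^ 2)
  simp only [cross, affineForm, innerPt, outerPt, outerChordFactor]; field_simp; ring

lemma innerChordFactor_comm (d T U W : ℝ) :
    innerChordFactor d T U W = innerChordFactor d U T W := by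
  simp only [innerChordFactor]; ring

lemma innerChordFactor_neg (hW : 1 ≤ W) (hWT : W ≤ T) (hTU : 4 * T ≤ U) (hd : 0 ≤ d)
    (hdT : d * T ≤ 1 / 256) : innerChordFactor d T U W < 0 := by
  have hT : 1 ≤ T := hW.trans hWT
  have hU : 0 ≤ U := by linarith
  have hUW : 0 ≤ U * W := by positivity
  have hlead : U * W * (W - 2 * T) ≤ -(U * W * T) := by
    nlinarith [mul_nonneg hUW (sub_nonneg.2 hWT)]
  have hsq : T * W ^ 2 ≤ U * W * T / 4 := by
    nlinarith [mul_le_mul_of_nonneg_left hWT (by positivity : 0 ≤ T * W),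
      mul_le_mul_of_nonneg_left hTU (by positivity : 0 ≤ T * W)]
  have hdterm : d * (1 + W ^ 2) * (1 + T * U) ≤ U * W * T / 64 := calc
    d * (1 + W ^ 2) * (1 + T * U) ≤ d * ((2 * W ^ 2) * (2 * T * U)) := by
      rw [mul_assoc]
      exact mul_le_mul_of_nonneg_left
        (mul_le_mul (by nlinarith) (by nlinarith) (by positivity) (by positivity)) hd
    _ = 4 * (d * T) * (W ^ 2 * U) := by ring
    _ ≤ 4 * (1 / 256) * (W * T * U) := by
      gcongr
      nlinarith [mul_le_mul_of_nonneg_left hWT (by positivity : 0 ≤ W * U)]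
    _ = U * W * T / 64 := by ring
  have hUWT : 4 * W ≤ U * W * T := by
    nlinarith [mul_le_mul_of_nonneg_left hTU (by positivity : 0 ≤ W * T)]
  simp only [innerChordFactor]
  nlinarith

lemma innerChordFactor_pos (hT : 1 ≤ T) (hTW : 4 * T ≤ W) (hU : 0 ≤ U) (hd : 0 ≤ d) :
    0 < innerChordFactor d T U W := by
  have hW : 8 ≤ W * (W - 2 * T) := by nlinarith
  have hlead : 8 * U ≤ U * W * (W - 2 * T) := by nlinarith [mul_le_mul_of_nonneg_left hW hU]
  have hsq : T ≤ T * W ^ 2 := by nlinarith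
  have hdterm : 0 ≤ d * (1 + W ^ 2) * (1 + T * U) := by positivity
  simp only [innerChordFactor]
  nlinarith

lemma outerChordFactor_pos (hT : 1 ≤ T) (hU : 1 ≤ U) (hW : 1 ≤ W) (hd : 0 ≤ d)
    (hdUW : d * (U + W) ≤ 2) : 0 < outerChordFactor d T U W := by
  have hUW : 1 ≤ U * W := by nlinarith
  have h1 : d * (U + W) * (T ^ 2 - 1) ≤ 2 * (T ^ 2 - 1) :=
    mul_le_mul_of_nonneg_right hdUW (by nlinarith)
  have h2 : 0 ≤ d * (2 * T * (U * W - 1)) := by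
    have : 0 ≤ U * W - 1 := by linarith
    positivity
  have h3 : 2 * (1 + T ^ 2) ≤ (1 + U * W) * (1 + T ^ 2) := by nlinarith
  simp only [outerChordFactor]
  nlinarith

/-- Vanishes on the line parallel to `outerPt S` at distance `d (S² - 2) / (S² + 1) < d` from
the origin. -/
def cutForm (d S : ℝ) : ℝ × ℝ → ℝ := affineForm (-(2 * S)) (1 - S ^ 2) (d * (S ^ 2 - 2))

lemma cutForm_outerPt (d S T : ℝ) : cutForm d S (outerPt T) =
    (2 * (T - S) * (1 + T * S) + d * (S ^ 2 - 2) * (1 + T ^ 2)) / (1 + T ^ 2) := by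
  have := (by positivity : (0 : ℝ) < 1 + T ^ 2)
  simp only [cutForm, affineForm, outerPt]; field_simp; ring

lemma cutForm_innerPt (d S T : ℝ) :
    cutForm d S (innerPt d T) = d * (2 * S ^ 2 - T ^ 2 - 4 * S * T - 3) / (1 + T ^ 2) := by
  have := (by positivity : (0 : ℝ) < 1 + T ^ 2)
  simp only [cutForm, affineForm, innerPt]; field_simp; ring

lemma cutForm_outerPt_pos (hS : 2 ≤ S) (hST : S ≤ T) (hd : 0 < d) :
    0 < cutForm d S (outerPt T) := by
  rw [cutForm_outerPt]
  have : 0 ≤ 2 * (T - S) * (1 + T * S) := by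
    have : 0 ≤ T - S := by linarith
    have : 0 ≤ 1 + T * S := by nlinarith
    positivity
  have : 0 < d * (S ^ 2 - 2) * (1 + T ^ 2) := by
    have : 0 < S ^ 2 - 2 := by nlinarith
    positivity
  positivity

lemma cutForm_outerPt_neg (hT : 0 < T) (hTS : 3 * T ≤ S) (hd : 0 < d) (hdS : d * S ≤ 1) :
    cutForm d S (outerPt T) < 0 := by
  rw [cutForm_outerPt]
  refine div_neg_of_neg_of_pos ?_ (by positivity)
  have hS : 0 < S := by linarith
  have h1 : d * (S ^ 2 - 2) * (1 + T ^ 2) ≤ S * (1 + T ^ 2) := by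
    have : d * (S ^ 2 - 2) ≤ S := by nlinarith
    nlinarith [sq_nonneg T]
  nlinarith [mul_pos hT hS]

lemma cutForm_innerPt_neg (hS : 0 ≤ S) (hST : 4 * S ≤ 3 * T) (hd : 0 < d) :
    cutForm d S (innerPt d T) < 0 := by
  rw [cutForm_innerPt]
  refine div_neg_of_neg_of_pos (mul_neg_of_pos_of_neg hd ?_) (by positivity)
  nlinarith

lemma cutForm_innerPt_pos (hT : 1 ≤ T) (hTS : 3 * T ≤ S) (hd : 0 < d) :
    0 < cutForm d S (innerPt d T) := by
  rw [cutForm_innerPt]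
  have : 0 < 2 * S ^ 2 - T ^ 2 - 4 * S * T - 3 := by nlinarith
  positivity

end Circles

section StarGraph

variable {V : Type*} {C : Set V} {c : V → V}

def starGraph (C : Set V) (c : V → V) : SimpleGraph V :=
  SimpleGraph.fromRel fun u v => v ∉ C ∧ u = c v

lemma starGraph_adj (hc : ∀ v, c v ∈ C) {u v : V} :
    (starGraph C c).Adj u v ↔ (v ∉ C ∧ u = c v) ∨ (u ∉ C ∧ v = c u) := by
  rw [starGraph, SimpleGraph.fromRel_adj, and_iff_right_iff_imp]
  rintro (⟨hv, h⟩ | ⟨hu, h⟩) rfl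
  exacts [hv (h ▸ hc _), hu (h ▸ hc _)]

lemma starGraph_adj_eq_of_notMem (hc : ∀ v, c v ∈ C) {u v : V} (hv : v ∉ C)
    (huv : (starGraph C c).Adj v u) : u = c v := by
  rcases (starGraph_adj hc).1 huv with ⟨-, rfl⟩ | ⟨-, rfl⟩
  exacts [absurd (hc u) hv, rfl]

lemma isStarForest_starGraph (hc : ∀ v, c v ∈ C) : IsStarForest (starGraph C c) := by
  refine ⟨C, fun u v huv => ?_, fun v hv u w hu hw => ?_⟩
  · rcases (starGraph_adj hc).1 huv with ⟨hv, rfl⟩ | ⟨hu, rfl⟩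
    · exact iff_of_true (hc v) hv
    · exact iff_of_false hu (not_not.2 (hc u))
  · rw [starGraph_adj_eq_of_notMem hc hv hu, starGraph_adj_eq_of_notMem hc hv hw]

lemma isPlaneGraph_starGraph {pts : V → ℝ × ℝ} (hpts : GenPos pts) (hc : ∀ v, c v ∈ C)
    (hsep : ∀ v w, v ∉ C → w ∉ C → c v ≠ c w →
      Disjoint (segment ℝ (pts (c v)) (pts v)) (segment ℝ (pts (c w)) (pts w))) :
    IsPlaneGraph pts (starGraph C c) := by
  have hmeet : ∀ v w, v ∉ C → w ∉ C → s(c v, v) ≠ s(c w, w) →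
      ∀ x ∈ segment ℝ (pts (c v)) (pts v), x ∈ segment ℝ (pts (c w)) (pts w) →
        x = pts (c v) ∧ x = pts (c w) := by
    intro v w hv hw hvw x hxv hxw
    by_cases hcw : c v = c w
    · rw [← hcw] at hxw ⊢
      have hvw : v ≠ w := by rintro rfl; exact hvw rfl
      have hx := eq_of_mem_segment_of_not_collinear
        (hpts.2 (c v) v w (fun h => hv (h ▸ hc v)) (fun h => hw (h ▸ hc v)) hvw) hxv hxw
      exact ⟨hx, hx⟩
    · exact absurd hxw (Set.disjoint_left.1 (hsep v w hv hw hcw) hxv)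
  intro a b a' b' hab ha'b' hne x hx hx'
  rcases (starGraph_adj hc).1 hab with ⟨hb, rfl⟩ | ⟨ha, rfl⟩ <;>
    rcases (starGraph_adj hc).1 ha'b' with ⟨hb', rfl⟩ | ⟨ha', rfl⟩
  · have h := hmeet b b' hb hb' hne x hx hx'
    exact ⟨.inl h.1, .inl h.2⟩
  · have h := hmeet b a' hb ha' (by rwa [Sym2.eq_swap (a := c a')]) x hx (by rwa [segment_symm])
    exact ⟨.inl h.1, .inr h.2⟩
  · have h := hmeet a b' ha hb' (by rwa [Sym2.eq_swap (a := c a)]) x (by rwa [segment_symm]) hx'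
    exact ⟨.inr h.1, .inl h.2⟩
  · have h := hmeet a a' ha ha' (by rwa [Sym2.eq_swap (a := c a), Sym2.eq_swap (a := c a')]) x
      (by rwa [segment_symm]) (by rwa [segment_symm])
    exact ⟨.inr h.1, .inr h.2⟩

end StarGraph

section Forests

variable {k : ℕ} {i : Fin k} {u v : Fin k × Bool}

/-- The side of the line `cutForm (radius k) (cutParam i) = 0` on which the endpoint `v` lies,
`true` being the positive side. -/
def side (i : Fin k) (v : Fin k × Bool) : Bool := xor v.2 (decide (v.1 < i))

lemma side_self (i : Fin k) (t : Bool) : side i (i, t) = t := by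
  simp [side]

lemma eq_side_iff_ne_side (h : u.1 ≠ v.1) : u.2 = side u.1 v ↔ v.2 ≠ side v.1 u := by
  obtain ⟨i, s⟩ := u
  obtain ⟨j, t⟩ := v
  rcases h.lt_or_gt with h | h <;> cases s <;> cases t <;> simp [side, h, h.not_gt]

def forest (i : Fin k) : SimpleGraph (Fin k × Bool) :=
  starGraph {v | v.1 = i} fun v => (i, side i v)

lemma forest_adj : (forest i).Adj u v ↔
    u.1 ≠ v.1 ∧ (u.1 = i ∧ u.2 = side i v ∨ v.1 = i ∧ v.2 = side i u) := by
  rw [forest, starGraph_adj (C := {v : Fin k × Bool | v.1 = i}) (c := fun v => (i, side i v))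
    fun _ => rfl]
  obtain ⟨u1, u2⟩ := u
  obtain ⟨v1, v2⟩ := v
  simp only [mem_ofPred_eq, Prod.mk.injEq]
  grind

def forests (k : ℕ) : Fin (k + 1) → SimpleGraph (Fin k × Bool) :=
  Fin.lastCases (matchingGraph k) forest

def forestIndex (u v : Fin k × Bool) : Fin (k + 1) :=
  if u.1 = v.1 then Fin.last k else (if u.2 = side u.1 v then u.1 else v.1).castSucc

lemma forests_adj_iff (huv : u ≠ v) (i : Fin (k + 1)) :
    (forests k i).Adj u v ↔ i = forestIndex u v := by
  induction i using Fin.lastCases with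
  | last =>
    simp only [forests, Fin.lastCases_last, matchingGraph, forestIndex]
    grind
  | cast j =>
    simp only [forests, Fin.lastCases_castSucc, forest_adj, forestIndex]
    have hside := eq_side_iff_ne_side (u := u) (v := v)
    grind

lemma isDecompositionOfComplete_forests : IsDecompositionOfComplete (forests k) :=
  fun u v huv =>
    ⟨forestIndex u v, (forests_adj_iff huv _).2 rfl, fun i => (forests_adj_iff huv i).1⟩

lemma isStarForest_matchingGraph : IsStarForest (matchingGraph k) := by
  refine ⟨{v | v.2 = false}, ?_, ?_⟩
  · rintro ⟨i, _ | _⟩ ⟨j, _ | _⟩ ⟨-, h⟩ <;> simp_all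
  · rintro ⟨i, _ | _⟩ hv ⟨j, _ | _⟩ ⟨l, _ | _⟩ ⟨hj, hj'⟩ ⟨hl, hl'⟩ <;> simp_all

lemma matchingGraph_adj_iff_sym2_eq :
    (matchingGraph k).Adj u v ↔ s(u, v) = s((u.1, false), (u.1, true)) := by
  rcases u with ⟨i, _ | _⟩ <;> rcases v with ⟨j, _ | _⟩ <;> simp [matchingGraph, eq_comm]

lemma segment_segPts_of_matchingGraph_adj {A B : Fin k → ℝ × ℝ}
    (h : (matchingGraph k).Adj u v) :
    segment ℝ (segPts A B u) (segPts A B v) = segment ℝ (A u.1) (B u.1) := by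
  rcases u with ⟨i, _ | _⟩ <;> rcases v with ⟨j, _ | _⟩ <;> obtain ⟨rfl, h⟩ := h <;>
    simp_all [segPts, segment_symm]

lemma isPlaneGraph_matchingGraph {A B : Fin k → ℝ × ℝ}
    (hAB : ∀ i j, i ≠ j → Disjoint (segment ℝ (A i) (B i)) (segment ℝ (A j) (B j))) :
    IsPlaneGraph (segPts A B) (matchingGraph k) := by
  intro a b a' b' hab ha'b' hne x hx hx'
  rw [segment_segPts_of_matchingGraph_adj hab] at hx
  rw [segment_segPts_of_matchingGraph_adj ha'b'] at hx'
  by_cases h : a.1 = a'.1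
  · rw [matchingGraph_adj_iff_sym2_eq] at hab ha'b'
    exact absurd (by rw [hab, ha'b', h]) hne
  · exact absurd hx' (Set.disjoint_left.1 (hAB _ _ h) hx)

lemma isStarForest_forests (i : Fin (k + 1)) : IsStarForest (forests k i) := by
  induction i using Fin.lastCases with
  | last =>
    rw [forests, Fin.lastCases_last]
    exact isStarForest_matchingGraph
  | cast i =>
    rw [forests, Fin.lastCases_castSucc]
    exact isStarForest_starGraph fun _ => rfl

end Forests

section Construction

variable {k : ℕ} {i j l m : Fin k}

def param (j : Fin k) : ℝ := 4 ^ (j.val + 1)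

def radius (k : ℕ) : ℝ := (4 ^ (k + 4))⁻¹

def cutParam (i : Fin k) : ℝ := 3 * 4 ^ i.val

lemma four_le_param (j : Fin k) : 4 ≤ param j := by
  simpa [param] using pow_le_pow_right₀ (by norm_num : (1 : ℝ) ≤ 4) (Nat.le_add_left 1 j.val)

lemma four_mul_param_le (h : j < l) : 4 * param j ≤ param l := by
  rw [param, param, ← pow_succ']
  exact pow_le_pow_right₀ (by norm_num) (by have := Fin.lt_def.1 h; omega)

lemma param_strictMono : StrictMono (param (k := k)) := fun j l h => by
  linarith [four_mul_param_le h, four_le_param j]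

lemma param_le_or_four_mul_param_le (j l : Fin k) :
    param l ≤ param j ∨ 4 * param j ≤ param l := by
  rcases le_or_gt l j with h | h
  exacts [.inl (param_strictMono.monotone h), .inr (four_mul_param_le h)]

lemma radius_pos : 0 < radius k := by
  rw [radius]; positivity

lemma radius_mul_param_le (j : Fin k) : radius k * param j ≤ 1 / 256 := by
  rw [radius, param, inv_mul_le_iff₀ (by positivity),
    show (4 : ℝ) ^ (k + 4) * (1 / 256) = 4 ^ k by ring]
  exact pow_le_pow_right₀ (by norm_num) j.isLt

lemma radius_mul_cutParam_le (i : Fin k) : radius k * cutParam i ≤ 1 := by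
  rw [radius, cutParam, inv_mul_le_iff₀ (by positivity), mul_one]
  calc 3 * (4 : ℝ) ^ i.val ≤ 4 ^ (i.val + 1) := by
        rw [pow_succ]; linarith [pow_pos (by norm_num : (0 : ℝ) < 4) i.val]
    _ ≤ 4 ^ (k + 4) := pow_le_pow_right₀ (by norm_num) (by omega)

lemma four_mul_cutParam_le (h : i ≤ j) : 4 * cutParam i ≤ 3 * param j := by
  rw [cutParam, param, show (4 : ℝ) * (3 * 4 ^ i.val) = 3 * 4 ^ (i.val + 1) by ring]
  exact mul_le_mul_of_nonneg_left
    (pow_le_pow_right₀ (by norm_num) (by simpa using Fin.le_def.1 h)) (by norm_num)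

lemma three_mul_param_le (h : j < i) : 3 * param j ≤ cutParam i := by
  rw [cutParam, param]
  exact mul_le_mul_of_nonneg_left (pow_le_pow_right₀ (by norm_num) (Fin.lt_def.1 h)) (by norm_num)

lemma three_le_cutParam (i : Fin k) : 3 ≤ cutParam i := by
  have := one_le_pow₀ (by norm_num : (1 : ℝ) ≤ 4) (n := i.val)
  rw [cutParam]; linarith

def innerEnd (j : Fin k) : ℝ × ℝ := innerPt (radius k) (param j)

def outerEnd (j : Fin k) : ℝ × ℝ := outerPt (param j)

lemma innerChordFactor_param_ne_zero (hjl : j ≠ l) (m : Fin k) :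
    innerChordFactor (radius k) (param j) (param l) (param m) ≠ 0 := by
  wlog h : j < l generalizing j l
  · rw [innerChordFactor_comm]
    exact this hjl.symm (lt_of_le_of_ne (not_lt.1 h) hjl.symm)
  rcases param_le_or_four_mul_param_le j m with hm | hm
  · exact (innerChordFactor_neg (by linarith [four_le_param m]) hm (four_mul_param_le h)
      radius_pos.le (radius_mul_param_le j)).ne
  · exact (innerChordFactor_pos (by linarith [four_le_param j]) hm
      (by linarith [four_le_param l]) radius_pos.le).ne'

lemma outerChordFactor_param_pos (j l m : Fin k) :
    0 < outerChordFactor (radius k) (param j) (param l) (param m) :=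
  outerChordFactor_pos (by linarith [four_le_param j]) (by linarith [four_le_param l])
    (by linarith [four_le_param m]) radius_pos.le
    (by linarith [radius_mul_param_le l, radius_mul_param_le m,
      mul_add (radius k) (param l) (param m)])

lemma param_sub_ne_zero (h : j ≠ l) : param l - param j ≠ 0 :=
  sub_ne_zero.2 (param_strictMono.injective.ne h.symm)

lemma not_collinear_innerEnd_innerEnd_innerEnd (hjl : j ≠ l) (hjm : j ≠ m) (hlm : l ≠ m) :
    ¬ Collinear ℝ ({innerEnd j, innerEnd l, innerEnd m} : Set (ℝ × ℝ)) := by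
  refine not_collinear_of_cross_ne_zero ?_
  rw [innerEnd, innerEnd, innerEnd, cross_innerPt_innerPt_innerPt]
  have := radius_pos (k := k)
  exact div_ne_zero (mul_ne_zero (mul_ne_zero (mul_ne_zero (by positivity) (param_sub_ne_zero hjl))
    (param_sub_ne_zero hjm)) (param_sub_ne_zero hlm)) (by positivity)

lemma not_collinear_outerEnd_outerEnd_outerEnd (hjl : j ≠ l) (hjm : j ≠ m) (hlm : l ≠ m) :
    ¬ Collinear ℝ ({outerEnd j, outerEnd l, outerEnd m} : Set (ℝ × ℝ)) := by
  refine not_collinear_of_cross_ne_zero ?_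
  rw [outerEnd, outerEnd, outerEnd, cross_outerPt_outerPt_outerPt]
  exact div_ne_zero (mul_ne_zero (mul_ne_zero (mul_ne_zero (by norm_num) (param_sub_ne_zero hjl))
    (param_sub_ne_zero hjm)) (param_sub_ne_zero hlm)) (by positivity)

lemma not_collinear_innerEnd_innerEnd_outerEnd (hjl : j ≠ l) (m : Fin k) :
    ¬ Collinear ℝ ({innerEnd j, innerEnd l, outerEnd m} : Set (ℝ × ℝ)) := by
  refine not_collinear_of_cross_ne_zero ?_
  rw [innerEnd, innerEnd, outerEnd, cross_innerPt_innerPt_outerPt]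
  have := radius_pos (k := k)
  exact div_ne_zero (mul_ne_zero (mul_ne_zero (by positivity) (param_sub_ne_zero hjl))
    (innerChordFactor_param_ne_zero hjl m)) (by positivity)

lemma not_collinear_innerEnd_outerEnd_outerEnd (j : Fin k) (hlm : l ≠ m) :
    ¬ Collinear ℝ ({innerEnd j, outerEnd l, outerEnd m} : Set (ℝ × ℝ)) := by
  refine not_collinear_of_cross_ne_zero ?_
  rw [innerEnd, outerEnd, outerEnd, cross_innerPt_outerPt_outerPt]
  exact div_ne_zero (mul_ne_zero (mul_ne_zero (by norm_num) (param_sub_ne_zero hlm))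
    (outerChordFactor_param_pos j l m).ne') (by positivity)

lemma segPts_injective : Function.Injective (segPts (innerEnd (k := k)) outerEnd) := by
  have hsep (j l : Fin k) : innerEnd j ≠ outerEnd l := fun h => by
    have hinner := innerPt_fst_pos (radius_pos (k := k)) (by linarith [four_le_param j])
    have houter := outerPt_fst_neg (by linarith [four_le_param l] : 1 < param l)
    rw [← innerEnd, h, outerEnd] at hinner
    linarith
  rintro ⟨j, _ | _⟩ ⟨l, _ | _⟩ h <;>
    simp only [segPts, Bool.false_eq_true, if_false, if_true] at h
  · rw [param_strictMono.injective (innerPt_injective radius_pos.ne' h)]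
  · exact absurd h (hsep j l)
  · exact absurd h.symm (hsep l j)
  · rw [param_strictMono.injective (outerPt_injective h)]

lemma genPos_segPts : GenPos (segPts (innerEnd (k := k)) outerEnd) := by
  refine ⟨segPts_injective, ?_⟩
  rintro ⟨j, _ | _⟩ ⟨l, _ | _⟩ ⟨m, _ | _⟩ hjl hjm hlm <;>
    simp only [segPts, Bool.false_eq_true, if_false, if_true, ne_eq, Prod.mk.injEq, and_true,
      and_false, not_false_eq_true] at hjl hjm hlm ⊢
  · exact not_collinear_innerEnd_innerEnd_innerEnd hjl hjm hlm
  · exact not_collinear_innerEnd_innerEnd_outerEnd hjl m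
  · rw [pair_comm]; exact not_collinear_innerEnd_innerEnd_outerEnd hjm l
  · exact not_collinear_innerEnd_outerEnd_outerEnd j hlm
  · rw [insert_comm, pair_comm]; exact not_collinear_innerEnd_innerEnd_outerEnd hlm j
  · rw [insert_comm]; exact not_collinear_innerEnd_outerEnd_outerEnd l hjm
  · rw [pair_comm, insert_comm]; exact not_collinear_innerEnd_outerEnd_outerEnd m hjl
  · exact not_collinear_outerEnd_outerEnd_outerEnd hjl hjm hlm

lemma disjoint_segment_innerEnd_outerEnd (h : j ≠ l) :
    Disjoint (segment ℝ (innerEnd j) (outerEnd j)) (segment ℝ (innerEnd l) (outerEnd l)) := by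
  wlog hjl : j < l generalizing j l
  · exact (this h.symm (lt_of_le_of_ne (not_lt.1 hjl) h.symm)).symm
  have hd := radius_pos (k := k)
  have hTU := sub_pos.2 (param_strictMono hjl)
  refine disjoint_segment_of_cross_pos ?_ ?_
  · rw [cross_swap, innerEnd, innerEnd, outerEnd, cross_innerPt_innerPt_outerPt, neg_pos]
    refine div_neg_of_neg_of_pos (mul_neg_of_pos_of_neg (by positivity) ?_) (by positivity)
    exact innerChordFactor_neg (by linarith [four_le_param j]) le_rfl (four_mul_param_le hjl)
      hd.le (radius_mul_param_le j)
  · rw [innerEnd, outerEnd, outerEnd, cross_innerPt_outerPt_outerPt]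
    exact div_pos (mul_pos (by positivity) (outerChordFactor_param_pos j j l)) (by positivity)

lemma cutForm_pos_of_side {v : Fin k × Bool} (h : side i v = true) :
    0 < cutForm (radius k) (cutParam i) (segPts innerEnd outerEnd v) := by
  rcases v with ⟨j, _ | _⟩ <;> by_cases hji : j < i <;>
    simp only [side, segPts, hji, decide_true, decide_false, Bool.xor_true, Bool.xor_false,
      Bool.not_false, Bool.not_true, Bool.false_eq_true, if_false, if_true] at h ⊢
  · exact cutForm_innerPt_pos (by linarith [four_le_param j]) (three_mul_param_le hji) radius_pos
  · exact cutForm_outerPt_pos (by linarith [three_le_cutParam i])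
      (by linarith [three_le_cutParam i, four_mul_cutParam_le (not_lt.1 hji)]) radius_pos

lemma cutForm_neg_of_side {v : Fin k × Bool} (h : side i v = false) :
    cutForm (radius k) (cutParam i) (segPts innerEnd outerEnd v) < 0 := by
  rcases v with ⟨j, _ | _⟩ <;> by_cases hji : j < i <;>
    simp only [side, segPts, hji, decide_true, decide_false, Bool.xor_true, Bool.xor_false,
      Bool.not_false, Bool.not_true, Bool.true_eq_false, if_true] at h ⊢
  · exact cutForm_innerPt_neg (by linarith [three_le_cutParam i])
      (four_mul_cutParam_le (not_lt.1 hji)) radius_pos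
  · exact cutForm_outerPt_neg (by linarith [four_le_param j]) (three_mul_param_le hji) radius_pos
      (radius_mul_cutParam_le i)

lemma isPlaneGraph_forest (i : Fin k) : IsPlaneGraph (segPts innerEnd outerEnd) (forest i) := by
  refine isPlaneGraph_starGraph genPos_segPts (fun _ => rfl) fun v w _ _ hvw => ?_
  have hside : side i v ≠ side i w := fun h => hvw (by rw [h])
  have hcut {v w} (hv : side i v = false) (hw : side i w = true) :
      Disjoint (segment ℝ (segPts innerEnd outerEnd (i, false)) (segPts innerEnd outerEnd v))
        (segment ℝ (segPts innerEnd outerEnd (i, true)) (segPts innerEnd outerEnd w)) :=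
    disjoint_segment_of_affineForm_neg_of_pos (cutForm_neg_of_side (side_self i false))
      (cutForm_neg_of_side hv) (cutForm_pos_of_side (side_self i true)) (cutForm_pos_of_side hw)
  cases hv : side i v <;> cases hw : side i w <;>
    simp only [hv, hw, ne_eq, not_true_eq_false] at hside ⊢
  exacts [hcut hv hw, (hcut hw hv).symm]

lemma isPlaneGraph_forests (i : Fin (k + 1)) :
    IsPlaneGraph (segPts innerEnd outerEnd) (forests k i) := by
  induction i using Fin.lastCases with
  | last =>
    rw [forests, Fin.lastCases_last]
    exact isPlaneGraph_matchingGraph fun _ _ => disjoint_segment_innerEnd_outerEnd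
  | cast i =>
    rw [forests, Fin.lastCases_castSucc]
    exact isPlaneGraph_forest i

end Construction

end StarForestArrangement

end

theorem exists_sf_extendable_arrangement_general (k : ℕ) :
    ∃ A B : Fin k → ℝ × ℝ, GenPos (segPts A B) ∧
      (∀ i j : Fin k, i ≠ j →
        Disjoint (segment ℝ (A i) (B i)) (segment ℝ (A j) (B j))) ∧
      SFExtendable A B := by
  open StarForestArrangement in
  exact ⟨innerEnd, outerEnd, genPos_segPts, fun _ _ => disjoint_segment_innerEnd_outerEnd,
    forests k, ⟨isDecompositionOfComplete_forests, isStarForest_forests, isPlaneGraph_forests⟩,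
    Fin.last k, Fin.lastCases_last⟩

/-- For every `k ≥ 1` there exists an SF-extendable arrangement of `k` pairwise disjoint
segments whose `2 * k` endpoints are in general position. -/
theorem exists_sf_extendable_arrangement (k : ℕ) (hk : 1 ≤ k) :
    ∃ A B : Fin k → ℝ × ℝ, GenPos (segPts A B) ∧
      (∀ i j : Fin k, i ≠ j →
        Disjoint (segment ℝ (A i) (B i)) (segment ℝ (A j) (B j))) ∧
      SFExtendable A B :=
  exists_sf_extendable_arrangement_general k
end
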